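/- The map ρ_n respects the Knuth relations: for all a, b, c ∈ {1,...,n} with a < b ≤ c we have ρ_n(bca) = ρ_n(bac), and for all a ≤ b < c we have ρ_n(cab) = ρ_n(acb). Hence ρ_n induces a well-defined monoid homomorphism from the plactic monoid of rank n into tropical matrices indexed by 2^{[n]}. -/

import Mathlib

/-- The `i`-th smallest element (0-indexed) of a finite set of naturals
(`0` if `i` is out of range). -/
def nthEl (S : Finset ℕ) (i : ℕ) : ℕ := (S.sort (· ≤ ·)).getD i 0

/-- The order on subsets of equal cardinality: `S ≤ T` iff `|S| = |T|` and the `i`-th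
smallest element of `S` is at most that of `T`, for all `i`. -/
def FLE (S T : Finset ℕ) : Prop :=
  S.card = T.card ∧ ∀ i < T.card, nthEl S i ≤ nthEl T i

/-- The general order: `S ≤ T` iff `|S| ≥ |T|` and the `i`-th smallest element of `S`
is at most that of `T` for all `i < |T|`. -/
def GLE (S T : Finset ℕ) : Prop :=
  T.card ≤ S.card ∧ ∀ i < T.card, nthEl S i ≤ nthEl T i

/-- A word `w` over `{1,…,n}` is readable from `P` to `Q` if there is a chain
`P ≤ S₁ ≤ … ≤ S_{|w|} ≤ Q` of subsets of `{1,…,n}` with `wᵢ ∈ Sᵢ` for each `i`. -/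
def Readable (n : ℕ) (w : List ℕ) (P Q : Finset ℕ) : Prop :=
  ∃ L : List (Finset ℕ), L.length = w.length ∧ (∀ A ∈ L, A ⊆ Finset.Icc 1 n) ∧
    List.Chain' FLE (P :: (L ++ [Q])) ∧
    ∀ i (h : i < w.length), w.get ⟨i, h⟩ ∈ L.getD i ∅

/-- Tropical (max-plus) product of matrices indexed by subsets of `{1,…,n}`. -/
noncomputable def tmul (n : ℕ) (A B : Finset ℕ → Finset ℕ → WithBot ℝ) :
    Finset ℕ → Finset ℕ → WithBot ℝ :=
  fun P Q => ((Finset.Icc 1 n).powerset).sup fun R => A P R + B R Q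

open Classical in
/-- The image of a generator `x ∈ {1,…,n}` under `ρₙ`. -/
noncomputable def rhoGen (n : ℕ) (x : ℕ) (P Q : Finset ℕ) : WithBot ℝ :=
  if FLE P Q then
    (if ∃ S : Finset ℕ, S ⊆ Finset.Icc 1 n ∧ FLE P S ∧ FLE S Q ∧ x ∈ S then 1 else 0)
  else ⊥

open Classical in
/-- The image of a word under `ρₙ`, extended multiplicatively (the empty word maps to the
matrix with `0` in positions `(P,Q)` with `P ≤ Q` and `-∞` elsewhere). -/
noncomputable def rhoW (n : ℕ) : List ℕ → Finset ℕ → Finset ℕ → WithBot ℝ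
  | [] => fun P Q => if FLE P Q then 0 else ⊥
  | x :: w => tmul n (rhoGen n x) (rhoW n w)

/-- The Knuth relations over `{1,…,n}`. -/
inductive KnuthRel (n : ℕ) : List ℕ → List ℕ → Prop
  | k1 (a b c : ℕ) (h1 : 1 ≤ a) (h2 : a < b) (h3 : b ≤ c) (h4 : c ≤ n) :
      KnuthRel n [b, c, a] [b, a, c]
  | k2 (a b c : ℕ) (h1 : 1 ≤ a) (h2 : a ≤ b) (h3 : b < c) (h4 : c ≤ n) :
      KnuthRel n [c, a, b] [a, c, b]

/-- The plactic congruence on words: the equivalence generated by applying Knuth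
relations inside words. Two words are related iff they represent the same element of
the plactic monoid of rank `n`. -/
def PlacticRel (n : ℕ) : List ℕ → List ℕ → Prop :=
  Relation.EqvGen fun w v => ∃ p s x y, KnuthRel n x y ∧ w = p ++ x ++ s ∧ v = p ++ y ++ s

/-- A semistandard Young tableau over `{1,…,n}`, given by its list of rows
(row 0 is the bottom row): entries lie in `{1,…,n}`, rows weakly increase left to right,
row lengths weakly decrease going up, columns strictly increase going up
(i.e. strictly decrease reading down). -/
structure Tableau (n : ℕ) where
  rows : List (List ℕ)
  entries_mem : ∀ r ∈ rows, ∀ x ∈ r, x ∈ Finset.Icc 1 n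
  row_weak : ∀ r ∈ rows, List.Pairwise (· ≤ ·) r
  shape : ∀ i, (rows.getD (i + 1) []).length ≤ (rows.getD i []).length
  col_strict : ∀ i j, j < (rows.getD (i + 1) []).length →
    (rows.getD i []).getD j 0 < (rows.getD (i + 1) []).getD j 0

/-- The number of occurrences of the symbol `y` in row `x` (rows numbered from 1, from
the bottom) of the tableau `T`. -/
def rowCount {n : ℕ} (T : Tableau n) (x y : ℕ) : ℕ := (T.rows.getD (x - 1) []).count y

/-- The row reading of a tableau: rows read left to right, from top row to bottom row. -/
def rowReading {n : ℕ} (T : Tableau n) : List ℕ := T.rows.reverse.flatten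

/-- The `j`-th column of a tableau, read from top to bottom. -/
def colOf {n : ℕ} (T : Tableau n) (j : ℕ) : List ℕ :=
  ((List.range T.rows.length).reverse).filterMap fun i => (T.rows.getD i [])[j]?

/-- The column reading of a tableau: columns read top to bottom, left to right. -/
def colReading {n : ℕ} (T : Tableau n) : List ℕ :=
  ((List.range ((T.rows.getD 0 []).length)).map (colOf T)).flatten

/-- The `(k,m)`-completion of `S ⊆ {1,…,m}`: adjoin to `S` the `k - |S|` largest
elements of `{1,…,m} \ S`. -/
def completion (k m : ℕ) (S : Finset ℕ) : Finset ℕ :=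
  S ∪ ((((Finset.Icc 1 m) \ S).sort (· ≤ ·)).reverse.take (k - S.card)).toFinset

/-- Tropical (max-plus) product of `n × n` matrices over `ℝ ∪ {-∞}`. -/
noncomputable def tmulF (n : ℕ) (A B : Fin n → Fin n → WithBot ℝ) :
    Fin n → Fin n → WithBot ℝ :=
  fun i j => Finset.univ.sup fun k => A i k + B k j

/-- The tropical identity matrix. -/
noncomputable def tIdF (n : ℕ) : Fin n → Fin n → WithBot ℝ :=
  fun i j => if i = j then (0 : WithBot ℝ) else ⊥

/-!
`ρₙ(w)_{P,Q}` is the largest length of a subword of `w` readable from `P` to `Q` (and `-∞`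
exactly when no chain of the right length joins `P` to `Q`), so `ρₙ(w) = ρₙ(v)` as soon as each
readable subword of one word is matched by an at least as long readable subword of the other.
This comparison survives adding a common prefix and suffix, and for the Knuth relations it comes
down to building sets in an interval `[X, Y]` of the order on `k`-subsets: for instance, if
`c ∈ X ≤ Y ∋ a` with `a < c`, some `V ∈ [X, Y]` contains both `a` and `c`, so `ca` readable
implies `ac` readable.
-/

lemma nthEl_lt_nthEl {S : Finset ℕ} {i j : ℕ} (hij : i < j) (hj : j < S.card) :
    nthEl S i < nthEl S j := by
  have hjl : j < (S.sort (· ≤ ·)).length := by rwa [Finset.length_sort]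
  have hil : i < (S.sort (· ≤ ·)).length := hij.trans hjl
  have := Finset.sortedLT_sort S (a := ⟨i, hil⟩) (b := ⟨j, hjl⟩) hij
  rw [nthEl, nthEl, List.getD_eq_getElem _ _ hil, List.getD_eq_getElem _ _ hjl]
  simpa using this

lemma nthEl_le_nthEl {S : Finset ℕ} {i j : ℕ} (hij : i ≤ j) (hj : j < S.card) :
    nthEl S i ≤ nthEl S j := by
  rcases hij.eq_or_lt with rfl | h
  · rfl
  · exact (nthEl_lt_nthEl h hj).le

lemma lt_of_nthEl_lt_nthEl {S : Finset ℕ} {i j : ℕ} (hi : i < S.card)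
    (h : nthEl S i < nthEl S j) : i < j := by
  by_contra! hji
  exact (nthEl_le_nthEl hji hi).not_gt h

lemma nthEl_add_le {S : Finset ℕ} {i d : ℕ} (h : i + d < S.card) :
    nthEl S i + d ≤ nthEl S (i + d) := by
  induction d with
  | zero => simp
  | succ d ih =>
    have := nthEl_lt_nthEl (show i + d < i + (d + 1) by omega) h
    have := ih (by omega)
    omega

lemma nthEl_add_le_of_le {S : Finset ℕ} {i j : ℕ} (hij : i ≤ j) (hj : j < S.card) :
    nthEl S i + (j - i) ≤ nthEl S j := by
  simpa [Nat.add_sub_cancel' hij] using nthEl_add_le (S := S) (i := i) (d := j - i) (by omega)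

lemma le_nthEl {S : Finset ℕ} {i : ℕ} (hi : i < S.card) : i ≤ nthEl S i := by
  have := nthEl_add_le_of_le (Nat.zero_le i) hi
  omega

lemma nthEl_mem {S : Finset ℕ} {i : ℕ} (hi : i < S.card) : nthEl S i ∈ S := by
  have hl : i < (S.sort (· ≤ ·)).length := by rwa [Finset.length_sort]
  rw [nthEl, List.getD_eq_getElem _ _ hl]
  exact (Finset.mem_sort _).1 (List.getElem_mem hl)

lemma exists_nthEl_eq {S : Finset ℕ} {x : ℕ} (hx : x ∈ S) :
    ∃ i < S.card, nthEl S i = x := by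
  obtain ⟨⟨i, hi⟩, hg⟩ := List.mem_iff_get.1 ((Finset.mem_sort (· ≤ ·)).2 hx)
  refine ⟨i, by rwa [← Finset.length_sort (· ≤ ·)], ?_⟩
  rw [nthEl, List.getD_eq_getElem _ _ hi, ← hg, List.get_eq_getElem]

def seqSet (m : ℕ) (f : ℕ → ℕ) : Finset ℕ := ((List.range m).map f).toFinset

section seqSet

variable {m : ℕ} {f : ℕ → ℕ}

lemma sort_seqSet (hf : StrictMonoOn f (Set.Iio m)) :
    (seqSet m f).sort (· ≤ ·) = (List.range m).map f := by
  have hsorted : ((List.range m).map f).Pairwise (· < ·) := by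
    rw [List.pairwise_iff_getElem]
    intro i j hi hj hij
    simp only [List.length_map, List.length_range] at hi hj
    simpa using hf hi hj hij
  exact (List.toFinset_sort (· ≤ ·) hsorted.nodup).2 (hsorted.imp le_of_lt)

lemma card_seqSet (hf : StrictMonoOn f (Set.Iio m)) : (seqSet m f).card = m := by
  rw [← Finset.length_sort (· ≤ ·), sort_seqSet hf, List.length_map, List.length_range]

lemma nthEl_seqSet (hf : StrictMonoOn f (Set.Iio m)) {i : ℕ} (hi : i < m) :
    nthEl (seqSet m f) i = f i := by
  rw [nthEl, sort_seqSet hf, List.getD_eq_getElem _ _ (by simpa using hi)]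
  simp

end seqSet

lemma FLE.refl (S : Finset ℕ) : FLE S S := ⟨rfl, fun _ _ => le_rfl⟩

lemma FLE.trans {S T U : Finset ℕ} (h₁ : FLE S T) (h₂ : FLE T U) : FLE S U :=
  ⟨h₁.1.trans h₂.1, fun i hi => (h₁.2 i (h₂.1 ▸ hi)).trans (h₂.2 i hi)⟩

lemma FLE.nthEl_le {S T : Finset ℕ} (h : FLE S T) {i : ℕ} (hi : i < S.card) :
    nthEl S i ≤ nthEl T i :=
  h.2 i (h.1 ▸ hi)

lemma subset_Icc_of_fle {n : ℕ} {S T V : Finset ℕ} (hS : S ⊆ Finset.Icc 1 n)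
    (hT : T ⊆ Finset.Icc 1 n) (hSV : FLE S V) (hVT : FLE V T) : V ⊆ Finset.Icc 1 n := by
  intro x hx
  obtain ⟨i, hi, rfl⟩ := exists_nthEl_eq hx
  have hS' := Finset.mem_Icc.1 (hS (nthEl_mem (hSV.1 ▸ hi)))
  have hT' := Finset.mem_Icc.1 (hT (nthEl_mem (hVT.1 ▸ hi)))
  have := hSV.nthEl_le (hSV.1 ▸ hi)
  have := hVT.nthEl_le hi
  exact Finset.mem_Icc.2 ⟨by omega, by omega⟩

lemma fle_seqSet {S : Finset ℕ} {f : ℕ → ℕ} (hf : StrictMonoOn f (Set.Iio S.card))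
    (h : ∀ i < S.card, nthEl S i ≤ f i) : FLE S (seqSet S.card f) :=
  ⟨(card_seqSet hf).symm, fun i hi => by
    rw [card_seqSet hf] at hi; rw [nthEl_seqSet hf hi]; exact h i hi⟩

lemma seqSet_fle {T : Finset ℕ} {f : ℕ → ℕ} (hf : StrictMonoOn f (Set.Iio T.card))
    (h : ∀ i < T.card, f i ≤ nthEl T i) : FLE (seqSet T.card f) T :=
  ⟨card_seqSet hf, fun i hi => by rw [nthEl_seqSet hf hi]; exact h i hi⟩

section Insert

variable {S T : Finset ℕ} {p e : ℕ}

lemma FLE.exists_raise (hST : FLE S T) (hp : p < S.card) (hSe : nthEl S p ≤ e)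
    (heT : e ≤ nthEl T p) :
    ∃ V, FLE S V ∧ FLE V T ∧ nthEl V p = e ∧ (∀ t < p, nthEl V t = nthEl S t) ∧
      ∀ q, p < q → q < S.card → nthEl V q = max (nthEl S q) (e + (q - p)) := by
  -- the least element of `[S, T]` whose `p`-th element is at least `e`
  set f : ℕ → ℕ := fun t =>
    if t < p then nthEl S t else if t = p then e else max (nthEl S t) (e + (t - p)) with hf
  have hmono : StrictMonoOn f (Set.Iio S.card) := by
    intro i hi j hj hij
    simp only [Set.mem_Iio] at hi hj
    have := nthEl_lt_nthEl hij hj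
    simp only [hf]
    split_ifs <;> first
      | omega
      | (have := nthEl_lt_nthEl (show i < p by omega) hp; omega)
  have hcard : T.card = S.card := hST.1.symm
  refine ⟨seqSet S.card f, fle_seqSet hmono fun t ht => ?_, hcard ▸ seqSet_fle (hcard ▸ hmono)
    fun t ht => ?_, by rw [nthEl_seqSet hmono hp]; simp [hf], fun t ht => ?_, fun q hq hqm => ?_⟩
  · simp only [hf]
    split_ifs with h₁ h₂
    · rfl
    · exact h₂ ▸ hSe
    · exact le_max_left _ _
  · have := hST.nthEl_le (show t < S.card by omega)
    simp only [hf]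
    split_ifs with h₁ h₂
    · exact this
    · exact h₂ ▸ heT
    · have := nthEl_add_le_of_le (S := T) (show p ≤ t by omega) ht
      omega
  · rw [nthEl_seqSet hmono (by omega)]; simp [hf, ht]
  · rw [nthEl_seqSet hmono hqm]; simp only [hf]; rw [if_neg (by omega), if_neg (by omega)]

lemma FLE.exists_lower (hST : FLE S T) (hp : p < S.card) (hSe : nthEl S p ≤ e)
    (heT : e ≤ nthEl T p) :
    ∃ V, FLE S V ∧ FLE V T ∧ nthEl V p = e ∧ ∀ q, p < q → q < S.card → nthEl V q = nthEl T q := by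
  -- the greatest element of `[S, T]` whose `p`-th element is at most `e`
  set f : ℕ → ℕ := fun t =>
    if t < p then min (nthEl T t) (e - (p - t)) else if t = p then e else nthEl T t with hf
  have hcard : T.card = S.card := hST.1.symm
  have hpe : p ≤ e := (le_nthEl hp).trans hSe
  have hmono : StrictMonoOn f (Set.Iio S.card) := by
    intro i hi j hj hij
    simp only [Set.mem_Iio] at hi hj
    have := nthEl_lt_nthEl hij (show j < T.card by omega)
    simp only [hf]
    split_ifs <;> first
      | omega
      | (have := nthEl_lt_nthEl (show p < j by omega) (show j < T.card by omega); omega)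
  refine ⟨seqSet S.card f, fle_seqSet hmono fun t ht => ?_, hcard ▸ seqSet_fle (hcard ▸ hmono)
    fun t ht => ?_, by rw [nthEl_seqSet hmono hp]; simp [hf], fun q hq hqm => ?_⟩
  · have := hST.nthEl_le ht
    simp only [hf]
    split_ifs with h₁ h₂
    · have := nthEl_add_le_of_le (S := S) h₁.le hp
      omega
    · exact h₂ ▸ hSe
    · exact this
  · simp only [hf]
    split_ifs with h₁ h₂
    · exact min_le_left _ _
    · exact h₂ ▸ heT
    · rfl
  · rw [nthEl_seqSet hmono hqm]; simp only [hf]; rw [if_neg (by omega), if_neg (by omega)]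

end Insert

section Interval

variable {S T : Finset ℕ} {a b c : ℕ}

lemma FLE.exists_mem_mem (hST : FLE S T) {δ γ : ℕ} (hδγ : δ < γ) (hγ : γ < S.card)
    (hSa : nthEl S δ ≤ a) (haT : a ≤ nthEl T δ) (hSc : nthEl S γ ≤ c) (hcT : c ≤ nthEl T γ)
    (hac : a + (γ - δ) ≤ c) : ∃ V, FLE S V ∧ FLE V T ∧ a ∈ V ∧ c ∈ V := by
  obtain ⟨U, hSU, hUT, hUδ, -, hUabove⟩ := hST.exists_raise (hδγ.trans hγ) hSa haT
  have hUγ : nthEl U γ ≤ c := by rw [hUabove γ hδγ hγ]; omega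
  obtain ⟨V, hUV, hVT, hVγ, hVbelow, -⟩ := hUT.exists_raise (hSU.1 ▸ hγ) hUγ hcT
  have hcard : V.card = S.card := (hSU.1.trans hUV.1).symm
  refine ⟨V, hSU.trans hUV, hVT, ?_, ?_⟩
  · rw [← hUδ, ← hVbelow δ hδγ]; exact nthEl_mem (by omega)
  · rw [← hVγ]; exact nthEl_mem (by omega)

lemma FLE.exists_mem_mem_of_lt (hST : FLE S T) (hc : c ∈ S) (ha : a ∈ T) (hac : a < c) :
    ∃ V, FLE S V ∧ FLE V T ∧ a ∈ V ∧ c ∈ V := by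
  obtain ⟨γ, hγ, rfl⟩ := exists_nthEl_eq hc
  obtain ⟨α, hα, rfl⟩ := exists_nthEl_eq ha
  have hcard : T.card = S.card := hST.1.symm
  have hαγ : α < γ := lt_of_nthEl_lt_nthEl hα (hac.trans_le (hST.nthEl_le hγ))
  obtain ⟨δ, hαδ, hδγ, hδ, hδ'⟩ : ∃ δ, α ≤ δ ∧ δ < γ ∧ γ - δ ≤ nthEl S γ - nthEl T α ∧
      (δ = α ∨ γ - δ = nthEl S γ - nthEl T α) :=
    ⟨max α (γ - (nthEl S γ - nthEl T α)), le_max_left _ _, max_lt hαγ (by omega), by omega,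
      by omega⟩
  refine hST.exists_mem_mem hδγ hγ ?_ (nthEl_le_nthEl hαδ (by omega)) le_rfl
    (hST.nthEl_le hγ) (by omega)
  rcases hδ' with rfl | hδ'
  · exact hST.nthEl_le (by omega)
  · have := nthEl_add_le_of_le hδγ.le hγ
    omega

lemma FLE.exists_mem_mem_of_nthEl (hST : FLE S T) {α γ : ℕ} (hαγ : α < γ)
    (hγ : γ < T.card) : ∃ V, FLE S V ∧ FLE V T ∧ nthEl S α ∈ V ∧ nthEl T γ ∈ V := by
  have hγ' : γ < S.card := hST.1 ▸ hγ
  refine hST.exists_mem_mem hαγ hγ' le_rfl (hST.nthEl_le (by omega)) (hST.nthEl_le hγ') le_rfl ?_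
  have := nthEl_add_le_of_le hαγ.le hγ'
  have := hST.nthEl_le hγ'
  omega

lemma FLE.exists_mem_mem_of_acb {A B C : Finset ℕ} (hAC : FLE A C) (hCB : FLE C B)
    (ha : a ∈ A) (hc : c ∈ C) (hb : b ∈ B) (hab : a ≤ b) (hbc : b < c) :
    ∃ V, FLE A V ∧ FLE V B ∧ a ∈ V ∧ c ∈ V := by
  obtain ⟨α, hα, rfl⟩ := exists_nthEl_eq ha
  obtain ⟨γ, hγ, rfl⟩ := exists_nthEl_eq hc
  obtain ⟨β, hβ, rfl⟩ := exists_nthEl_eq hb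
  have hAB := hAC.trans hCB
  have hcard : A.card = C.card ∧ C.card = B.card := ⟨hAC.1, hCB.1⟩
  have hβγ : β < γ := lt_of_nthEl_lt_nthEl hβ (hbc.trans_le (hCB.nthEl_le hγ))
  have hAγ := hAC.nthEl_le (show γ < A.card by omega)
  have hCγ := hCB.nthEl_le hγ
  rcases lt_or_ge α γ with hαγ | hγα
  · obtain ⟨δ, hαδ, hδγ, hδ, hδ'⟩ : ∃ δ, α ≤ δ ∧ δ < γ ∧ γ - δ ≤ nthEl C γ - nthEl A α ∧
        (δ = α ∨ γ - δ = nthEl C γ - nthEl A α) :=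
      ⟨max α (γ - (nthEl C γ - nthEl A α)), le_max_left _ _, max_lt hαγ (by omega), by omega,
        by omega⟩
    refine hAB.exists_mem_mem hδγ (by omega) ?_ ?_ hAγ (by omega) (by omega)
    · rcases hδ' with rfl | hδ'
      · rfl
      · have := nthEl_add_le_of_le hδγ.le (show γ < A.card by omega)
        omega
    · have := nthEl_le_nthEl hαδ (show δ < B.card by omega)
      have := hAB.nthEl_le hα
      omega
  · refine hAB.exists_mem_mem (δ := γ - 1) (by omega) (by omega) ?_ ?_ hAγ (by omega) (by omega)
    · exact (nthEl_lt_nthEl (show γ - 1 < α by omega) hα).le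
    · have := nthEl_le_nthEl (show β ≤ γ - 1 by omega) (show γ - 1 < B.card by omega)
      omega

lemma FLE.exists_desc_of_bac {A B C : Finset ℕ} (hBA : FLE B A) (hAC : FLE A C)
    (hb : b ∈ B) (ha : a ∈ A) (hc : c ∈ C) (hab : a < b) (hbc : b ≤ c) :
    ∃ V W, FLE B V ∧ FLE V W ∧ FLE W C ∧ c ∈ V ∧ a ∈ W := by
  obtain ⟨α, hα, rfl⟩ := exists_nthEl_eq ha
  obtain ⟨γ, hγ, rfl⟩ := exists_nthEl_eq hc
  obtain ⟨β, hβ, rfl⟩ := exists_nthEl_eq hb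
  have hcard : B.card = A.card ∧ A.card = C.card := ⟨hBA.1, hAC.1⟩
  rcases lt_or_ge α γ with hαγ | hγα
  · obtain ⟨V, hAV, hVC, haV, hcV⟩ := hAC.exists_mem_mem_of_nthEl hαγ hγ
    exact ⟨V, V, hBA.trans hAV, .refl V, hVC, hcV, haV⟩
  have hαβ : α < β :=
    lt_of_nthEl_lt_nthEl hα (hab.trans_le (hBA.nthEl_le hβ))
  have hCγα := nthEl_le_nthEl hγα (show α < C.card by omega)
  obtain ⟨W, hAW, hWC, hWα, hWabove⟩ := hAC.exists_lower hα le_rfl (by omega)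
  have hCγ := nthEl_le_nthEl (show γ ≤ α + 1 by omega) (show α + 1 < C.card by omega)
  obtain ⟨V, hBV, hVW, hVα, -⟩ := (hBA.trans hAW).exists_lower (show α + 1 < B.card by omega)
    ((nthEl_le_nthEl (show α + 1 ≤ β by omega) hβ).trans hbc)
    (by rw [hWabove (α + 1) (by omega) (by omega)]; exact hCγ)
  have hVcard : V.card = A.card := hVW.1.trans hAW.1.symm
  refine ⟨V, W, hBV, hVW, hWC, ?_, ?_⟩
  · rw [← hVα]; exact nthEl_mem (by omega)
  · rw [← hWα]; exact nthEl_mem (by have := hAW.1; omega)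

lemma FLE.exists_mem_or_exists_desc (hST : FLE S T) (ha : a ∈ S) (hc : c ∈ T)
    (hab : a ≤ b) (hbc : b ≤ c) :
    (∃ V, FLE S V ∧ FLE V T ∧ b ∈ V) ∨ ∃ V W, FLE S V ∧ FLE V W ∧ FLE W T ∧ c ∈ V ∧ a ∈ W := by
  obtain ⟨α, hα, rfl⟩ := exists_nthEl_eq ha
  obtain ⟨γ, hγ, rfl⟩ := exists_nthEl_eq hc
  have hcard : T.card = S.card := hST.1.symm
  by_cases hSb : nthEl S γ ≤ b
  · obtain ⟨V, hSV, hVT, hVγ, -⟩ := hST.exists_raise (by omega) hSb hbc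
    exact .inl ⟨V, hSV, hVT, hVγ ▸ nthEl_mem (by have := hSV.1; omega)⟩
  have hαγ : α < γ := lt_of_nthEl_lt_nthEl hα (by omega)
  obtain ⟨V, hSV, hVT, hVγ, hVbelow, -⟩ :=
    hST.exists_raise (show γ < S.card by omega) (hST.nthEl_le (by omega)) le_rfl
  obtain ⟨W, hSW, hWT, hWα, hWabove⟩ := hST.exists_lower hα le_rfl (hST.nthEl_le hα)
  have hVW : FLE V W := by
    have := hSV.1; have := hSW.1
    refine ⟨by omega, fun i hi => ?_⟩
    rcases lt_or_ge i γ with h | h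
    · rw [hVbelow i h]; exact hSW.nthEl_le (by omega)
    · rw [hWabove i (by omega) (by omega)]; exact hVT.nthEl_le (by omega)
  refine .inr ⟨V, W, hSV, hVW, hWT, ?_, ?_⟩
  · rw [← hVγ]; exact nthEl_mem (by have := hSV.1; omega)
  · rw [← hWα]; exact nthEl_mem (by have := hSW.1; omega)

end Interval

lemma List.Sublist.pair_cases {α : Type*} {x y : α} {u : List α} (h : u.Sublist [x, y]) :
    u = [] ∨ u = [x] ∨ u = [y] ∨ u = [x, y] := by
  simpa [List.sublists] using List.mem_sublists.2 h

lemma List.Sublist.triple_cases {α : Type*} {x y z : α} {u : List α}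
    (h : u.Sublist [x, y, z]) :
    u = [] ∨ u = [x] ∨ u = [y] ∨ u = [x, y] ∨ u = [z] ∨ u = [x, z] ∨ u = [y, z] ∨
      u = [x, y, z] := by
  simpa [List.sublists] using List.mem_sublists.2 h

section Readable

variable {n : ℕ}

lemma readable_nil_iff {P Q : Finset ℕ} : Readable n [] P Q ↔ FLE P Q := by
  constructor
  · rintro ⟨L, hL, -, hchain, -⟩
    rw [List.length_nil, List.length_eq_zero_iff] at hL
    subst hL
    exact List.isChain_pair.1 hchain
  · intro h
    exact ⟨[], rfl, by simp, List.isChain_pair.2 h, fun i hi => absurd hi (Nat.not_lt_zero _)⟩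

lemma readable_cons_iff {x : ℕ} {w : List ℕ} {P Q : Finset ℕ} :
    Readable n (x :: w) P Q ↔
      ∃ U ⊆ Finset.Icc 1 n, FLE P U ∧ x ∈ U ∧ Readable n w U Q := by
  constructor
  · rintro ⟨_ | ⟨U, L⟩, hL, hsub, hchain, hmem⟩
    · simp at hL
    change List.IsChain FLE (P :: U :: (L ++ [Q])) at hchain
    rw [List.isChain_cons_cons] at hchain
    refine ⟨U, hsub U List.mem_cons_self, hchain.1, by simpa using hmem 0 (by simp),
      L, by simpa using hL, fun A hA => hsub A (List.mem_cons_of_mem U hA), hchain.2,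
      fun i hi => by simpa using hmem (i + 1) (by simpa using hi)⟩
  · rintro ⟨U, hU, hPU, hx, L, hL, hsub, hchain, hmem⟩
    refine ⟨U :: L, by simpa using hL, ?_, ?_, ?_⟩
    · simpa [hU] using hsub
    · exact List.isChain_cons_cons.2 ⟨hPU, hchain⟩
    · rintro (_ | i) hi
      · simpa using hx
      · simpa using hmem i (by simpa using hi)

lemma Readable.cons {x : ℕ} {w : List ℕ} {P U Q : Finset ℕ} (hU : U ⊆ Finset.Icc 1 n)
    (hPU : FLE P U) (hx : x ∈ U) (h : Readable n w U Q) : Readable n (x :: w) P Q :=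
  readable_cons_iff.2 ⟨U, hU, hPU, hx, h⟩

lemma Readable.fle {w : List ℕ} {P Q : Finset ℕ} (h : Readable n w P Q) : FLE P Q := by
  induction w generalizing P with
  | nil => exact readable_nil_iff.1 h
  | cons x w ih =>
    obtain ⟨U, -, hPU, -, hU⟩ := readable_cons_iff.1 h
    exact hPU.trans (ih hU)

lemma Readable.mono_left {w : List ℕ} {P P' Q : Finset ℕ} (hP : FLE P' P)
    (h : Readable n w P Q) : Readable n w P' Q := by
  cases w with
  | nil => exact readable_nil_iff.2 (hP.trans (readable_nil_iff.1 h))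
  | cons x w =>
    obtain ⟨U, hU, hPU, hx, hw⟩ := readable_cons_iff.1 h
    exact hw.cons hU (hP.trans hPU) hx

lemma readable_append_iff {u v : List ℕ} {P Q : Finset ℕ} :
    Readable n (u ++ v) P Q ↔ ∃ R, Readable n u P R ∧ Readable n v R Q := by
  induction u generalizing P with
  | nil =>
    simp only [List.nil_append, readable_nil_iff]
    exact ⟨fun h => ⟨P, .refl P, h⟩, fun ⟨R, hPR, h⟩ => h.mono_left hPR⟩
  | cons x u ih =>
    simp only [List.cons_append, readable_cons_iff, ih]
    constructor
    · rintro ⟨U, hU, hPU, hx, R, hu, hv⟩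
      exact ⟨R, ⟨U, hU, hPU, hx, hu⟩, hv⟩
    · rintro ⟨R, ⟨U, hU, hPU, hx, hu⟩, hv⟩
      exact ⟨U, hU, hPU, hx, R, hu, hv⟩

lemma Readable.sublist {u w : List ℕ} (huw : u.Sublist w) {P Q : Finset ℕ}
    (h : Readable n w P Q) : Readable n u P Q := by
  induction huw generalizing P with
  | slnil => exact h
  | cons x _ ih =>
    obtain ⟨U, -, hPU, -, hw⟩ := readable_cons_iff.1 h
    exact (ih hw).mono_left hPU
  | cons_cons x _ ih =>
    obtain ⟨U, hU, hPU, hx, hw⟩ := readable_cons_iff.1 h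
    exact (ih hw).cons hU hPU hx

lemma exists_mem_iff_readable_singleton {x : ℕ} {P Q : Finset ℕ} :
    (∃ S : Finset ℕ, S ⊆ Finset.Icc 1 n ∧ FLE P S ∧ FLE S Q ∧ x ∈ S) ↔
      Readable n [x] P Q := by
  simp only [readable_cons_iff, readable_nil_iff]
  exact ⟨fun ⟨S, hS, hPS, hSQ, hx⟩ => ⟨S, hS, hPS, hx, hSQ⟩,
    fun ⟨S, hS, hPS, hx, hSQ⟩ => ⟨S, hS, hPS, hSQ, hx⟩⟩

end Readable

section Knuth

variable {n a b c : ℕ} {P Q : Finset ℕ}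

lemma Readable.swap_of_lt {s : List ℕ} (hac : a < c) (h : Readable n (c :: a :: s) P Q) :
    Readable n (a :: c :: s) P Q := by
  obtain ⟨U, hU, hPU, hcU, h⟩ := readable_cons_iff.1 h
  obtain ⟨U', hU', hUU', haU', h⟩ := readable_cons_iff.1 h
  obtain ⟨V, hUV, hVU', haV, hcV⟩ := hUU'.exists_mem_mem_of_lt hcU haU' hac
  have hV := subset_Icc_of_fle hU hU' hUV hVU'
  exact .cons hV (hPU.trans hUV) haV (.cons hV (.refl V) hcV (h.mono_left hVU'))

lemma Readable.abc_or_ca_of_ac (hab : a ≤ b) (hbc : b ≤ c) (h : Readable n [a, c] P Q) :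
    Readable n [a, b, c] P Q ∨ Readable n [c, a] P Q := by
  obtain ⟨U, hU, hPU, haU, h⟩ := readable_cons_iff.1 h
  obtain ⟨U', hU', hUU', hcU', h⟩ := readable_cons_iff.1 h
  rcases hUU'.exists_mem_or_exists_desc haU hcU' hab hbc with
    ⟨V, hUV, hVU', hbV⟩ | ⟨V, W, hUV, hVW, hWU', hcV, haW⟩
  · exact .inl (.cons hU hPU haU (.cons (subset_Icc_of_fle hU hU' hUV hVU') hUV hbV
      (.cons hU' hVU' hcU' h)))
  · have hW := subset_Icc_of_fle hU hU' (hUV.trans hVW) hWU'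
    exact .inr (.cons (subset_Icc_of_fle hU hW hUV hVW) (hPU.trans hUV) hcV
      (.cons hW hVW haW (h.mono_left hWU')))

lemma Readable.bca_of_bac (hab : a < b) (hbc : b ≤ c) (h : Readable n [b, a, c] P Q) :
    Readable n [b, c, a] P Q := by
  obtain ⟨U, hU, hPU, hbU, h⟩ := readable_cons_iff.1 h
  obtain ⟨U', hU', hUU', haU', h⟩ := readable_cons_iff.1 h
  obtain ⟨U'', hU'', hU'U'', hcU'', h⟩ := readable_cons_iff.1 h
  obtain ⟨V, W, hUV, hVW, hWU'', hcV, haW⟩ :=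
    hUU'.exists_desc_of_bac hU'U'' hbU haU' hcU'' hab hbc
  have hW := subset_Icc_of_fle hU hU'' (hUV.trans hVW) hWU''
  exact .cons hU hPU hbU (.cons (subset_Icc_of_fle hU hW hUV hVW) hUV hcV
    (.cons hW hVW haW (h.mono_left hWU'')))

lemma Readable.cab_of_acb (hab : a ≤ b) (hbc : b < c) (h : Readable n [a, c, b] P Q) :
    Readable n [c, a, b] P Q := by
  obtain ⟨U, hU, hPU, haU, h⟩ := readable_cons_iff.1 h
  obtain ⟨U', hU', hUU', hcU', h⟩ := readable_cons_iff.1 h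
  obtain ⟨U'', hU'', hU'U'', hbU'', h⟩ := readable_cons_iff.1 h
  obtain ⟨V, hUV, hVU'', haV, hcV⟩ :=
    hUU'.exists_mem_mem_of_acb hU'U'' haU hcU' hbU'' hab hbc
  have hV := subset_Icc_of_fle hU hU'' hUV hVU''
  exact .cons hV (hPU.trans hUV) hcV (.cons hV (.refl V) haV (.cons hU'' hVU'' hbU'' h))

end Knuth

def ReadDominated (n : ℕ) (w v : List ℕ) : Prop :=
  ∀ ⦃u : List ℕ⦄ ⦃P Q : Finset ℕ⦄, u.Sublist w → Readable n u P Q →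
    ∃ u', u'.Sublist v ∧ u.length ≤ u'.length ∧ Readable n u' P Q

section ReadDominated

variable {n a b c : ℕ}

lemma ReadDominated.append {w v : List ℕ} (h : ReadDominated n w v) (p s : List ℕ) :
    ReadDominated n (p ++ w ++ s) (p ++ v ++ s) := by
  intro u P Q hu hr
  obtain ⟨u₁₂, u₃, rfl, hu₁₂, hu₃⟩ := List.sublist_append_iff.1 hu
  obtain ⟨u₁, u₂, rfl, hu₁, hu₂⟩ := List.sublist_append_iff.1 hu₁₂
  obtain ⟨R, hr₁₂, hr₃⟩ := readable_append_iff.1 hr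
  obtain ⟨S, hr₁, hr₂⟩ := readable_append_iff.1 hr₁₂
  obtain ⟨u₂', hu₂', hlen, hr₂'⟩ := h hu₂ hr₂
  exact ⟨u₁ ++ u₂' ++ u₃, (hu₁.append hu₂').append hu₃, by simpa using hlen,
    readable_append_iff.2 ⟨R, readable_append_iff.2 ⟨S, hr₁, hr₂'⟩, hr₃⟩⟩

lemma readDominated_swap (hac : a < c) : ReadDominated n [c, a] [a, c] := by
  intro u P Q hu hr
  rcases hu.pair_cases with rfl | rfl | rfl | rfl
  all_goals first
    | exact ⟨[a, c], .refl _, le_rfl, hr.swap_of_lt hac⟩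
    | exact ⟨_, by simp, le_rfl, hr⟩

lemma readDominated_bac_bca (hab : a < b) (hbc : b ≤ c) :
    ReadDominated n [b, a, c] [b, c, a] := by
  intro u P Q hu hr
  rcases hu.triple_cases with rfl | rfl | rfl | rfl | rfl | rfl | rfl | rfl
  all_goals first
    | exact ⟨[b, c, a], .refl _, le_rfl, hr.bca_of_bac hab hbc⟩
    | exact (hr.abc_or_ca_of_ac hab.le hbc).elim
        (fun hr => ⟨[b, c], by simp, le_rfl, hr.sublist (by simp)⟩)
        (fun hr => ⟨[c, a], by simp, le_rfl, hr⟩)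
    | exact ⟨_, by simp, le_rfl, hr⟩

lemma readDominated_acb_cab (hab : a ≤ b) (hbc : b < c) :
    ReadDominated n [a, c, b] [c, a, b] := by
  intro u P Q hu hr
  rcases hu.triple_cases with rfl | rfl | rfl | rfl | rfl | rfl | rfl | rfl
  all_goals first
    | exact ⟨[c, a, b], .refl _, le_rfl, hr.cab_of_acb hab hbc⟩
    | exact (hr.abc_or_ca_of_ac hab hbc.le).elim
        (fun hr => ⟨[a, b], by simp, le_rfl, hr.sublist (by simp)⟩)
        (fun hr => ⟨[c, a], by simp, le_rfl, hr⟩)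
    | exact ⟨_, by simp, le_rfl, hr⟩

lemma KnuthRel.readDominated {x y : List ℕ} (h : KnuthRel n x y) :
    ReadDominated n x y ∧ ReadDominated n y x := by
  cases h with
  | k1 a b c _ hab hbc _ =>
    exact ⟨(readDominated_swap (hab.trans_le hbc)).append [b] [], readDominated_bac_bca hab hbc⟩
  | k2 a b c _ hab hbc _ =>
    exact ⟨(readDominated_swap (hab.trans_lt hbc)).append [] [b], readDominated_acb_cab hab hbc⟩

end ReadDominated

section Tropical

variable {n : ℕ}

lemma le_tmul {A B : Finset ℕ → Finset ℕ → WithBot ℝ} {P R Q : Finset ℕ}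
    (hR : R ⊆ Finset.Icc 1 n) : A P R + B R Q ≤ tmul n A B P Q :=
  Finset.le_sup (f := fun R => A P R + B R Q) (Finset.mem_powerset.2 hR)

lemma exists_tmul_eq (A B : Finset ℕ → Finset ℕ → WithBot ℝ) (P Q : Finset ℕ) :
    ∃ R ⊆ Finset.Icc 1 n, tmul n A B P Q = A P R + B R Q := by
  obtain ⟨R, hR, h⟩ := Finset.exists_mem_eq_sup _ (Finset.powerset_nonempty _)
    fun R => A P R + B R Q
  exact ⟨R, Finset.mem_powerset.1 hR, h⟩

lemma rhoGen_ne_bot_iff {x : ℕ} {P Q : Finset ℕ} : rhoGen n x P Q ≠ ⊥ ↔ FLE P Q := by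
  unfold rhoGen
  split_ifs with h <;> simp [h]

open Classical in
lemma rhoGen_of_fle {x : ℕ} {P Q : Finset ℕ} (h : FLE P Q) :
    rhoGen n x P Q = if Readable n [x] P Q then 1 else 0 := by
  simp only [rhoGen, if_pos h, exists_mem_iff_readable_singleton]

lemma rhoGen_nonneg {x : ℕ} {P Q : Finset ℕ} (h : FLE P Q) : 0 ≤ rhoGen n x P Q := by
  rw [rhoGen_of_fle h]
  split_ifs <;> simp

lemma rhoW_cons (x : ℕ) (w : List ℕ) : rhoW n (x :: w) = tmul n (rhoGen n x) (rhoW n w) := rfl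

lemma rhoW_ne_bot_of_subset (w : List ℕ) {U Q : Finset ℕ} (hU : U ⊆ Finset.Icc 1 n)
    (hUQ : FLE U Q) : rhoW n w U Q ≠ ⊥ := by
  induction w with
  | nil => simp [rhoW, hUQ]
  | cons x w ih =>
    rw [rhoW_cons]
    exact ne_bot_of_le_ne_bot (WithBot.add_ne_bot.2 ⟨rhoGen_ne_bot_iff.2 (.refl U), ih⟩)
      (le_tmul hU)

lemma exists_readable_rhoW_eq {w : List ℕ} {P Q : Finset ℕ} (h : rhoW n w P Q ≠ ⊥) :
    ∃ u, u.Sublist w ∧ Readable n u P Q ∧ rhoW n w P Q = u.length := by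
  induction w generalizing P with
  | nil =>
    have hPQ : FLE P Q := by by_contra hPQ; simp [rhoW, hPQ] at h
    exact ⟨[], .slnil, readable_nil_iff.2 hPQ, by simp [rhoW, hPQ]⟩
  | cons x w ih =>
    obtain ⟨R, -, hR⟩ := exists_tmul_eq (n := n) (rhoGen n x) (rhoW n w) P Q
    rw [rhoW_cons, hR, WithBot.add_ne_bot, rhoGen_ne_bot_iff] at h
    obtain ⟨u, hu, hr, hval⟩ := ih h.2
    rw [rhoW_cons, hR, rhoGen_of_fle h.1, hval]
    split_ifs with hx
    · obtain ⟨U, hU, hPU, hxU, hUR⟩ := readable_cons_iff.1 hx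
      refine ⟨x :: u, hu.cons_cons x, .cons hU hPU hxU (hr.mono_left (readable_nil_iff.1 hUR)), ?_⟩
      simp [add_comm]
    · exact ⟨u, hu.cons x, hr.mono_left h.1, by simp⟩

lemma rhoW_cons_ne_bot_iff {x : ℕ} {w : List ℕ} {P Q : Finset ℕ} :
    rhoW n (x :: w) P Q ≠ ⊥ ↔ ∃ R ⊆ Finset.Icc 1 n, FLE P R ∧ FLE R Q := by
  constructor
  · intro h
    obtain ⟨R, hR, hR'⟩ := exists_tmul_eq (n := n) (rhoGen n x) (rhoW n w) P Q
    rw [rhoW_cons, hR', WithBot.add_ne_bot, rhoGen_ne_bot_iff] at h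
    obtain ⟨u, -, hu, -⟩ := exists_readable_rhoW_eq h.2
    exact ⟨R, hR, h.1, hu.fle⟩
  · rintro ⟨R, hR, hPR, hRQ⟩
    exact ne_bot_of_le_ne_bot (WithBot.add_ne_bot.2
      ⟨rhoGen_ne_bot_iff.2 hPR, rhoW_ne_bot_of_subset w hR hRQ⟩) (le_tmul hR)

lemma Readable.exists_start {u : List ℕ} {P Q : Finset ℕ} (h : Readable n u P Q)
    (hPQ : ∃ R ⊆ Finset.Icc 1 n, FLE P R ∧ FLE R Q) :
    ∃ R ⊆ Finset.Icc 1 n, FLE P R ∧ Readable n u R Q := by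
  cases u with
  | nil =>
    obtain ⟨R, hR, hPR, hRQ⟩ := hPQ
    exact ⟨R, hR, hPR, readable_nil_iff.2 hRQ⟩
  | cons x u =>
    obtain ⟨U, hU, hPU, hxU, hu⟩ := readable_cons_iff.1 h
    exact ⟨U, hU, hPU, hu.cons hU (.refl U) hxU⟩

lemma length_le_rhoW {u w : List ℕ} {P Q : Finset ℕ} (hu : u.Sublist w)
    (hr : Readable n u P Q) (h : rhoW n w P Q ≠ ⊥) : (u.length : WithBot ℝ) ≤ rhoW n w P Q := by
  induction w generalizing u P with
  | nil =>
    obtain rfl := List.sublist_nil.1 hu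
    simp [rhoW, readable_nil_iff.1 hr]
  | cons x w ih =>
    rcases List.sublist_cons_iff.1 hu with hu | ⟨u', rfl, hu'⟩
    · obtain ⟨R, hR, hPR, hRQ⟩ := hr.exists_start (rhoW_cons_ne_bot_iff.1 h)
      rw [rhoW_cons]
      calc (u.length : WithBot ℝ) = 0 + u.length := (zero_add _).symm
        _ ≤ rhoGen n x P R + rhoW n w R Q :=
          add_le_add (rhoGen_nonneg hPR) (ih hu hRQ (rhoW_ne_bot_of_subset w hR hRQ.fle))
        _ ≤ _ := le_tmul hR
    · obtain ⟨U, hU, hPU, hxU, hUQ⟩ := readable_cons_iff.1 hr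
      rw [rhoW_cons]
      have hx : Readable n [x] P U := .cons hU hPU hxU (readable_nil_iff.2 (.refl U))
      calc ((x :: u').length : WithBot ℝ) = 1 + u'.length := by simp [add_comm]
        _ ≤ rhoGen n x P U + rhoW n w U Q := by
          rw [rhoGen_of_fle hPU, if_pos hx]
          exact add_le_add le_rfl (ih hu' hUQ (rhoW_ne_bot_of_subset w hU hUQ.fle))
        _ ≤ _ := le_tmul hU

lemma rhoW_ne_bot_of_length_eq {w v : List ℕ} (hwv : w.length = v.length) {P Q : Finset ℕ}
    (h : rhoW n w P Q ≠ ⊥) : rhoW n v P Q ≠ ⊥ := by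
  cases w with
  | nil => rwa [List.eq_nil_of_length_eq_zero hwv.symm]
  | cons x w =>
    obtain ⟨y, v, rfl⟩ := List.exists_cons_of_length_eq_add_one hwv.symm
    exact rhoW_cons_ne_bot_iff.2 (rhoW_cons_ne_bot_iff.1 h)

lemma rhoW_le_of_readDominated {w v : List ℕ} (hwv : w.length = v.length)
    (hd : ReadDominated n w v) (P Q : Finset ℕ) : rhoW n w P Q ≤ rhoW n v P Q := by
  by_cases h : rhoW n w P Q = ⊥
  · exact h ▸ bot_le
  obtain ⟨u, hu, hr, hval⟩ := exists_readable_rhoW_eq h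
  obtain ⟨u', hu', hlen, hr'⟩ := hd hu hr
  rw [hval]
  exact (Nat.cast_le.2 hlen).trans (length_le_rhoW hu' hr' (rhoW_ne_bot_of_length_eq hwv h))

lemma KnuthRel.rhoW_append_eq {x y : List ℕ} (h : KnuthRel n x y) (p s : List ℕ) :
    rhoW n (p ++ x ++ s) = rhoW n (p ++ y ++ s) := by
  have hlen : x.length = y.length := by cases h <;> rfl
  funext P Q
  exact le_antisymm
    (rhoW_le_of_readDominated (by simp [hlen]) (h.readDominated.1.append p s) P Q)
    (rhoW_le_of_readDominated (by simp [hlen]) (h.readDominated.2.append p s) P Q)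

end Tropical

/-- `ρₙ` respects the Knuth relations (`ρₙ(bca) = ρₙ(bac)` for
`a < b ≤ c`, and `ρₙ(cab) = ρₙ(acb)` for `a ≤ b < c`), and hence induces a well-defined
homomorphism on the plactic monoid of rank `n`: plactically equivalent words have equal
images. -/
theorem stmt8 (n : ℕ) :
    (∀ a b c : ℕ, 1 ≤ a → a < b → b ≤ c → c ≤ n →
      rhoW n [b, c, a] = rhoW n [b, a, c]) ∧
    (∀ a b c : ℕ, 1 ≤ a → a ≤ b → b < c → c ≤ n →
      rhoW n [c, a, b] = rhoW n [a, c, b]) ∧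
    (∀ w v : List ℕ, PlacticRel n w v → rhoW n w = rhoW n v) := by
  refine ⟨fun a b c h₁ hab hbc h₄ => ?_, fun a b c h₁ hab hbc h₄ => ?_, fun w v h => ?_⟩
  · simpa using (KnuthRel.k1 a b c h₁ hab hbc h₄).rhoW_append_eq [] []
  · simpa using (KnuthRel.k2 a b c h₁ hab hbc h₄).rhoW_append_eq [] []
  · refine (Setoid.ker (rhoW n)).iseqv.eqvGen_iff.1 (h.mono ?_)
    rintro _ _ ⟨p, s, x, y, hxy, rfl, rfl⟩
    exact hxy.rhoW_append_eq p s
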